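/- (Theorem 2.) Consider a continuous game with N players, strategy sets S_i ⊆ ℝ^d_+, joint strategy space S = ∏_{i=1}^N S_i, payoffs π_i : S → ℝ, and social function γ : ℝ^{Nd}_+ → ℝ_+ with γ(0) = 0. Suppose: γ is monotone; γ is playerwise DR-submodular; for all s, s' ∈ S, ∑_{i=1}^N [γ(s_i + s'_i, s_{-i}) − γ(s)] ≥ η (γ(s + s') − γ(s)) for some η ∈ (0, 1]; π_i(s) ≥ γ(s) − γ(0, s_{-i}) for every i and s ∈ S; and γ(s) ≥ ∑_{i=1}^N π_i(s) for every s ∈ S. Then for any coarse correlated equilibrium σ (with the relevant integrands integrable) and any s⋆ ∈ S, (1 + η) · ∫ γ(s) dσ(s) ≥ η · γ(s⋆); in particular the robust price of anarchy is at most (1 + η)/η. -/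

import Mathlib

open MeasureTheory

/-- `f` is monotone on `X`: `f x ≤ f y` whenever `x ≤ y` in `X`. -/
def MonotoneOnSet {ι : Type*} (X : Set (ι → ℝ)) (f : (ι → ℝ) → ℝ) : Prop :=
  ∀ ⦃x⦄, x ∈ X → ∀ ⦃y⦄, y ∈ X → x ≤ y → f x ≤ f y

/-- `f` is DR-submodular on `X`. -/
def DRSubmodularOn {ι : Type*} [DecidableEq ι] (X : Set (ι → ℝ)) (f : (ι → ℝ) → ℝ) : Prop :=
  ∀ ⦃x y : ι → ℝ⦄, x ∈ X → y ∈ X → x ≤ y →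
    ∀ i : ι, ∀ k : ℝ, 0 ≤ k →
      x + Pi.single i k ∈ X → y + Pi.single i k ∈ X →
        f (x + Pi.single i k) - f x ≥ f (y + Pi.single i k) - f y

/-- Replace player `i`'s block of the joint strategy `s` by `v`, i.e. the outcome
`(v, s₋ᵢ)`. -/
def upd {N d : ℕ} (s : Fin N × Fin d → ℝ) (i : Fin N) (v : Fin d → ℝ) :
    Fin N × Fin d → ℝ :=
  fun q => if q.1 = i then v q.2 else s q

/-- The joint strategy space `S = ∏ᵢ Sᵢ`, viewed inside `ℝ^{Nd}`. -/
def joint {N d : ℕ} (S : Fin N → Set (Fin d → ℝ)) : Set (Fin N × Fin d → ℝ) :=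
  {s | ∀ i : Fin N, (fun r => s (i, r)) ∈ S i}

/-- `γ` is playerwise DR-submodular on `ℝ^{Nd}_+`: for every player `i` and fixed strategies
of the other players, the map `sᵢ ↦ γ(sᵢ, s₋ᵢ)` is DR-submodular on `ℝ^d_+`. -/
def PlayerwiseDRSubmodular {N d : ℕ} (γ : (Fin N × Fin d → ℝ) → ℝ) : Prop :=
  ∀ (i : Fin N) (s : Fin N × Fin d → ℝ), 0 ≤ s →
    DRSubmodularOn {v : Fin d → ℝ | 0 ≤ v} (fun v => γ (upd s i v))

/-!
The deviation of player `i` to `s⋆ᵢ` earns at least the marginal value `γ(s⋆ᵢ, s₋ᵢ) - γ(0, s₋ᵢ)`,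
which by playerwise DR-submodularity dominates the marginal value `γ(sᵢ + s⋆ᵢ, s₋ᵢ) - γ(s)` of
adding `s⋆ᵢ` on top of `sᵢ`. Summing over players, the generalized submodularity ratio and
monotonicity give `∑ᵢ πᵢ(s⋆ᵢ, s₋ᵢ) ≥ η γ(s⋆) - η γ(s)`: the game is `(η, η)`-smooth. Integrating
this against a coarse correlated equilibrium and using `∑ᵢ πᵢ ≤ γ` yields
`(1 + η) 𝔼_σ[γ] ≥ η γ(s⋆)`.
-/

/-- Roughgarden's `(λ, μ)`-smoothness argument, with `c` standing for `λ γ(s⋆)`. -/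
theorem le_one_add_mul_integral_of_smooth {Ω ι : Type*} [MeasurableSpace Ω] [Fintype ι]
    (σ : Measure Ω) [IsProbabilityMeasure σ] (γ : Ω → ℝ) (π : ι → Ω → ℝ) (dev : ι → Ω → Ω)
    (c μ : ℝ) (hsmooth : ∀ᵐ s ∂σ, c - μ * γ s ≤ ∑ i, π i (dev i s))
    (hsum : ∀ᵐ s ∂σ, ∑ i, π i s ≤ γ s)
    (hCCE : ∀ i, ∫ s, π i (dev i s) ∂σ ≤ ∫ s, π i s ∂σ)
    (hint_γ : Integrable γ σ) (hint_π : ∀ i, Integrable (π i) σ)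
    (hint_dev : ∀ i, Integrable (fun s => π i (dev i s)) σ) :
    c ≤ (1 + μ) * ∫ s, γ s ∂σ := by
  have hdev : ∫ s, (c - μ * γ s) ∂σ ≤ ∫ s, ∑ i, π i (dev i s) ∂σ :=
    integral_mono_ae ((integrable_const c).sub (hint_γ.const_mul μ))
      (integrable_finsetSum _ fun i _ => hint_dev i) hsmooth
  rw [integral_sub (integrable_const c) (hint_γ.const_mul μ), integral_const, integral_const_mul,
    integral_finsetSum _ fun i _ => hint_dev i, probReal_univ, one_smul] at hdev
  have hwelfare : ∑ i, ∫ s, π i s ∂σ ≤ ∫ s, γ s ∂σ := by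
    rw [← integral_finsetSum _ fun i _ => hint_π i]
    exact integral_mono_ae (integrable_finsetSum _ fun i _ => hint_π i) hint_γ hsum
  have hequil := Finset.sum_le_sum fun i (_ : i ∈ Finset.univ) => hCCE i
  linarith

/-- Add `v` one coordinate at a time. -/
theorem DRSubmodularOn.sub_le_sub_of_le {ι : Type*} [Fintype ι] [DecidableEq ι]
    {f : (ι → ℝ) → ℝ} (hf : DRSubmodularOn {v : ι → ℝ | 0 ≤ v} f)
    {x y v : ι → ℝ} (hx : 0 ≤ x) (hxy : x ≤ y) (hv : 0 ≤ v) :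
    f (y + v) - f y ≤ f (x + v) - f x := by
  have hy : 0 ≤ y := hx.trans hxy
  suffices h : ∀ t : Finset ι, f (y + ∑ r ∈ t, Pi.single r (v r)) - f y ≤
      f (x + ∑ r ∈ t, Pi.single r (v r)) - f x by
    simpa only [Finset.univ_sum_single] using h Finset.univ
  intro t
  induction t using Finset.induction_on with
  | empty => simp
  | @insert i t hi ih =>
    have hpart : (0 : ι → ℝ) ≤ ∑ r ∈ t, Pi.single r (v r) :=
      Finset.sum_nonneg fun r _ => Pi.single_nonneg.2 (hv r)
    have hx' : 0 ≤ x + ∑ r ∈ t, Pi.single r (v r) := add_nonneg hx hpart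
    have hy' : 0 ≤ y + ∑ r ∈ t, Pi.single r (v r) := add_nonneg hy hpart
    have hvi : (0 : ι → ℝ) ≤ Pi.single i (v i) := Pi.single_nonneg.2 (hv i)
    have hstep := hf hx' hy' (add_le_add_left hxy _) i (v i) (hv i)
      (add_nonneg hx' hvi) (add_nonneg hy' hvi)
    have hshift : ∀ z : ι → ℝ, z + ∑ r ∈ insert i t, Pi.single r (v r) =
        z + ∑ r ∈ t, Pi.single r (v r) + Pi.single i (v i) := fun z => by
      rw [Finset.sum_insert hi]; abel
    rw [hshift, hshift]
    linarith

section Upd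

variable {N d : ℕ}

theorem upd_self (s : Fin N × Fin d → ℝ) (i : Fin N) : upd s i (fun r => s (i, r)) = s := by
  funext q
  by_cases h : q.1 = i
  · subst h; simp [upd]
  · simp [upd, h]

theorem upd_upd (s : Fin N × Fin d → ℝ) (i : Fin N) (v w : Fin d → ℝ) :
    upd (upd s i v) i w = upd s i w := by
  funext q
  by_cases h : q.1 = i <;> simp [upd, h]

theorem upd_mem_joint {S : Fin N → Set (Fin d → ℝ)} {s : Fin N × Fin d → ℝ} (hs : s ∈ joint S)
    {i : Fin N} {v : Fin d → ℝ} (hv : v ∈ S i) : upd s i v ∈ joint S := by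
  intro j
  by_cases h : j = i
  · subst h; simpa [upd] using hv
  · simpa [upd, h] using hs j

theorem nonneg_of_mem_joint {S : Fin N → Set (Fin d → ℝ)} (hS : ∀ i, ∀ v ∈ S i, 0 ≤ v)
    {s : Fin N × Fin d → ℝ} (hs : s ∈ joint S) : 0 ≤ s :=
  fun q => hS q.1 _ (hs q.1) q.2

end Upd

theorem PlayerwiseDRSubmodular.sub_le_sub_upd {N d : ℕ} {γ : (Fin N × Fin d → ℝ) → ℝ}
    (hγ : PlayerwiseDRSubmodular γ) {s : Fin N × Fin d → ℝ} (hs : 0 ≤ s) (i : Fin N)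
    {v : Fin d → ℝ} (hv : 0 ≤ v) :
    γ (upd s i (fun r => s (i, r) + v r)) - γ s ≤ γ (upd s i v) - γ (upd s i 0) := by
  have h := (hγ i s hs).sub_le_sub_of_le le_rfl (fun r => hs (i, r)) hv
  rw [zero_add, upd_self] at h
  exact h

theorem smooth_of_generalized_submodularity {N d : ℕ} {S : Fin N → Set (Fin d → ℝ)}
    (hS : ∀ i, ∀ v ∈ S i, 0 ≤ v) {π : Fin N → (Fin N × Fin d → ℝ) → ℝ}
    {γ : (Fin N × Fin d → ℝ) → ℝ} (hmono : MonotoneOnSet {x : Fin N × Fin d → ℝ | 0 ≤ x} γ)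
    (hplayer : PlayerwiseDRSubmodular γ) {η : ℝ} (hη : 0 ≤ η)
    (hgen : ∀ s ∈ joint S, ∀ s' ∈ joint S,
      ∑ i : Fin N, (γ (upd s i (fun r => s (i, r) + s' (i, r))) - γ s) ≥
        η * (γ (s + s') - γ s))
    (hpayoff : ∀ i : Fin N, ∀ s ∈ joint S, π i s ≥ γ s - γ (upd s i 0))
    {s sstar : Fin N × Fin d → ℝ} (hs : s ∈ joint S) (hstar : sstar ∈ joint S) :
    η * γ sstar - η * γ s ≤ ∑ i, π i (upd s i (fun r => sstar (i, r))) := by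
  have hs0 := nonneg_of_mem_joint hS hs
  have hstar0 := nonneg_of_mem_joint hS hstar
  have hmarginal : ∀ i, γ (upd s i (fun r => s (i, r) + sstar (i, r))) - γ s ≤
      π i (upd s i (fun r => sstar (i, r))) := fun i => by
    have hpay := hpayoff i _ (upd_mem_joint hs (hstar i))
    rw [upd_upd] at hpay
    linarith [hplayer.sub_le_sub_upd hs0 i (v := fun r => sstar (i, r)) fun r => hstar0 (i, r)]
  have hgrow : γ sstar ≤ γ (s + sstar) :=
    hmono hstar0 (add_nonneg hs0 hstar0) (le_add_of_nonneg_left hs0)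
  calc η * γ sstar - η * γ s ≤ η * (γ (s + sstar) - γ s) := by nlinarith
    _ ≤ ∑ i, (γ (upd s i (fun r => s (i, r) + sstar (i, r))) - γ s) := hgen s hs sstar hstar
    _ ≤ ∑ i, π i (upd s i (fun r => sstar (i, r))) := Finset.sum_le_sum fun i _ => hmarginal i

theorem poa_cce_generalized_submodularity_general {N d : ℕ}
    (S : Fin N → Set (Fin d → ℝ)) (hS : ∀ i, ∀ v ∈ S i, 0 ≤ v)
    (π : Fin N → (Fin N × Fin d → ℝ) → ℝ)
    (γ : (Fin N × Fin d → ℝ) → ℝ)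
    (hmono : MonotoneOnSet {x : Fin N × Fin d → ℝ | 0 ≤ x} γ)
    (hplayer : PlayerwiseDRSubmodular γ)
    (η : ℝ) (hη0 : 0 < η)
    (hgen : ∀ s ∈ joint S, ∀ s' ∈ joint S,
      ∑ i : Fin N, (γ (upd s i (fun r => s (i, r) + s' (i, r))) - γ s) ≥
        η * (γ (s + s') - γ s))
    (hpayoff : ∀ i : Fin N, ∀ s ∈ joint S, π i s ≥ γ s - γ (upd s i 0))
    (hsum : ∀ s ∈ joint S, γ s ≥ ∑ i : Fin N, π i s)
    (σ : Measure (Fin N × Fin d → ℝ)) [IsProbabilityMeasure σ]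
    (hsupp : ∀ᵐ s ∂σ, s ∈ joint S)
    (hCCE : ∀ i : Fin N, ∀ v ∈ S i,
      (∫ s, π i s ∂σ) ≥ ∫ s, π i (upd s i v) ∂σ)
    (hint_γ : Integrable γ σ)
    (hint_π : ∀ i : Fin N, Integrable (π i) σ)
    (hint_dev : ∀ i : Fin N, ∀ v ∈ S i, Integrable (fun s => π i (upd s i v)) σ) :
    ∀ sstar ∈ joint S, (1 + η) * (∫ s, γ s ∂σ) ≥ η * γ sstar := by
  intro sstar hstar
  refine le_one_add_mul_integral_of_smooth σ γ π (fun i s => upd s i (fun r => sstar (i, r)))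
    (η * γ sstar) η ?_ ?_ (fun i => hCCE i _ (hstar i)) hint_γ hint_π
    (fun i => hint_dev i _ (hstar i))
  · filter_upwards [hsupp] with s hs
    exact smooth_of_generalized_submodularity hS hmono hplayer hη0.le hgen hpayoff hs hstar
  · filter_upwards [hsupp] with s hs using hsum s hs

/-- Theorem 2: if the monotone nonnegative social function `γ` is playerwise DR-submodular
with generalized submodularity ratio at least `η ∈ (0,1]`, and conditions (ii), (iii) of valid
utility games hold, then every coarse correlated equilibrium `σ` satisfies
`(1 + η) · 𝔼_{s∼σ}[γ(s)] ≥ η · γ(s⋆)`; i.e. the robust price of anarchy is at most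
`(1 + η)/η`. -/
theorem poa_cce_generalized_submodularity {N d : ℕ}
    (S : Fin N → Set (Fin d → ℝ)) (hS : ∀ i, ∀ v ∈ S i, 0 ≤ v)
    (π : Fin N → (Fin N × Fin d → ℝ) → ℝ)
    (γ : (Fin N × Fin d → ℝ) → ℝ) (hγ0 : γ 0 = 0)
    (hγnn : ∀ x : Fin N × Fin d → ℝ, 0 ≤ x → 0 ≤ γ x)
    (hmono : MonotoneOnSet {x : Fin N × Fin d → ℝ | 0 ≤ x} γ)
    (hplayer : PlayerwiseDRSubmodular γ)
    (η : ℝ) (hη0 : 0 < η) (hη1 : η ≤ 1)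
    (hgen : ∀ s ∈ joint S, ∀ s' ∈ joint S,
      ∑ i : Fin N, (γ (upd s i (fun r => s (i, r) + s' (i, r))) - γ s) ≥
        η * (γ (s + s') - γ s))
    (hpayoff : ∀ i : Fin N, ∀ s ∈ joint S, π i s ≥ γ s - γ (upd s i 0))
    (hsum : ∀ s ∈ joint S, γ s ≥ ∑ i : Fin N, π i s)
    (σ : Measure (Fin N × Fin d → ℝ)) [IsProbabilityMeasure σ]
    (hsupp : ∀ᵐ s ∂σ, s ∈ joint S)
    (hCCE : ∀ i : Fin N, ∀ v ∈ S i,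
      (∫ s, π i s ∂σ) ≥ ∫ s, π i (upd s i v) ∂σ)
    (hint_γ : Integrable γ σ)
    (hint_π : ∀ i : Fin N, Integrable (π i) σ)
    (hint_dev : ∀ i : Fin N, ∀ v ∈ S i, Integrable (fun s => π i (upd s i v)) σ) :
    ∀ sstar ∈ joint S, (1 + η) * (∫ s, γ s ∂σ) ≥ η * γ sstar :=
  poa_cce_generalized_submodularity_general S hS π γ hmono hplayer η hη0 hgen hpayoff hsum σ hsupp
    hCCE hint_γ hint_π hint_dev
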